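/- arXiv:1210.6085 — 5 statements merged into one kernel-verified Lean document; each statement's English description precedes it below -/
import Mathlib

section
/- Let G be a finite group of odd order, let p be the smallest prime dividing |G|, and let V be a finite-dimensional Q-linear representation of G. If dim_Q V > dim_Q V^G, then dim_Q V ≥ dim_Q V^G + (p−1). -/
open Polynomial Module

lemma key_lemma {V : Type*} [AddCommGroup V] [Module ℚ V] [FiniteDimensional ℚ V]
    (q : ℕ) (hq : q.Prime) (A : Module.End ℚ V) (hAq : A ^ q = 1) (hA1 : A ≠ 1) :
    Module.finrank ℚ (LinearMap.ker (A - 1)) + (q - 1) ≤ Module.finrank ℚ V := by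
  haveI : Fact q.Prime := ⟨hq⟩
  set Φ : ℚ[X] := cyclotomic q ℚ with hΦ
  have hirr : Irreducible Φ := cyclotomic.irreducible_rat hq.pos
  have hmonic : Φ.Monic := cyclotomic.monic q ℚ
  have hfac : (X - C 1) * Φ = X ^ q - 1 := by
    rw [hΦ, cyclotomic_prime, mul_comm]
    simpa using geom_sum_mul (X : ℚ[X]) q
  have hXsub : aeval A ((X : ℚ[X]) - C 1) = A - 1 := by rw [map_sub, aeval_X, aeval_C, map_one]
  have hker1 : aeval A ((X - C 1) * Φ) = 0 := by
    rw [hfac, map_sub, map_pow, aeval_X, map_one, hAq, sub_self]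
  have hcop : IsCoprime (X - C 1) Φ := by
    rw [(irreducible_X_sub_C (1:ℚ)).coprime_iff_not_dvd, dvd_iff_isRoot]
    intro hroot
    have h2 := eval_one_cyclotomic_prime (R := ℚ) (p := q)
    rw [IsRoot.def] at hroot
    rw [hroot] at h2
    exact_mod_cast hq.ne_zero (by exact_mod_cast h2.symm)
  have hdisj : LinearMap.ker (A - 1) ⊓ LinearMap.ker (aeval A Φ) = ⊥ := by
    rw [Submodule.eq_bot_iff]
    intro x hx
    obtain ⟨hx1, hx2⟩ := Submodule.mem_inf.mp hx
    obtain ⟨a, b, hab⟩ := hcop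
    have e1 : (A - 1) x = 0 := LinearMap.mem_ker.mp hx1
    have e2 : aeval A Φ x = 0 := LinearMap.mem_ker.mp hx2
    calc x = aeval A (a * (X - C 1) + b * Φ) x := by rw [hab, map_one]; rfl
      _ = aeval A a ((A - 1) x) + aeval A b (aeval A Φ x) := by
          rw [map_add, map_mul, map_mul, hXsub, LinearMap.add_apply,
            Module.End.mul_apply, Module.End.mul_apply]
      _ = 0 := by rw [e1, e2, map_zero, map_zero, add_zero]
  have hne : LinearMap.ker (aeval A Φ) ≠ ⊥ := by
    intro hbot
    apply hA1
    have hsurj : Function.Surjective (aeval A Φ) :=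
      (LinearMap.injective_iff_surjective).mp (LinearMap.ker_eq_bot.mp hbot)
    have h4 : A - 1 = 0 := by
      ext y
      obtain ⟨x, rfl⟩ := hsurj y
      have h5 : ((A - 1) * aeval A Φ) x = 0 := by
        rw [← hXsub, ← map_mul, hker1]; rfl
      simpa using h5
    rwa [sub_eq_zero] at h4
  set W := LinearMap.ker (aeval A Φ) with hW
  have hcomm : A * aeval A Φ = aeval A Φ * A := by
    have h5 : aeval A ((X : ℚ[X]) * Φ) = aeval A (Φ * X) := by rw [mul_comm]
    simpa [map_mul] using h5
  have hinvar : ∀ x ∈ W, A x ∈ W := by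
    intro x hx
    rw [hW, LinearMap.mem_ker] at hx ⊢
    have h6 : aeval A Φ (A x) = A (aeval A Φ x) := by
      have h7 := congrArg (fun f : Module.End ℚ V => f x) hcomm
      simpa [Module.End.mul_apply] using h7.symm
    rw [h6, hx, map_zero]
  set B := A.restrict hinvar with hB
  have hBpow : ∀ (n : ℕ) (x : W), ((B ^ n) x : V) = (A ^ n) (x : V) := by
    intro n x
    rw [hB, Module.End.pow_restrict, LinearMap.restrict_apply]
  have hBΦ : aeval B Φ = 0 := by
    ext x
    have h1 : ((aeval B Φ) x : V) = aeval A Φ (x : V) := by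
      rw [aeval_eq_sum_range (p := Φ) B, aeval_eq_sum_range (p := Φ) A]
      simp only [LinearMap.sum_apply, LinearMap.smul_apply]
      rw [Submodule.coe_sum]
      simp [hBpow]
    have h2 : aeval A Φ (x : V) = 0 := x.2
    simp only [LinearMap.zero_apply]
    rw [h1, h2, ZeroMemClass.coe_zero]
  haveI : Nontrivial W := Submodule.nontrivial_iff_ne_bot.mpr hne
  have hint : IsIntegral ℚ B := ⟨Φ, hmonic, hBΦ⟩
  have hmp : minpoly ℚ B = Φ := by
    have hdvd : minpoly ℚ B ∣ Φ := minpoly.dvd ℚ B hBΦ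
    obtain ⟨c, hc⟩ := hdvd
    rcases hirr.isUnit_or_isUnit hc with hu | hu
    · exfalso
      have h1 : minpoly ℚ B = 1 := eq_one_of_monic_natDegree_zero (minpoly.monic hint)
        (natDegree_eq_zero_of_isUnit hu)
      have h7 := minpoly.aeval ℚ B
      rw [h1, map_one] at h7
      exact one_ne_zero h7
    · exact (Polynomial.eq_of_monic_of_associated (minpoly.monic hint) hmonic
        ⟨hu.unit, by rw [IsUnit.unit_spec, ← hc]⟩)
  have hdeg : (minpoly ℚ B).natDegree = q - 1 := by
    rw [hmp, hΦ, natDegree_cyclotomic, Nat.totient_prime hq]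
  have hWrank : q - 1 ≤ Module.finrank ℚ W := by
    have hdvd2 : minpoly ℚ B ∣ B.charpoly := minpoly.dvd ℚ B (B.aeval_self_charpoly)
    have := Polynomial.natDegree_le_of_dvd hdvd2 (B.charpoly_monic.ne_zero)
    rwa [hdeg, B.charpoly_natDegree] at this
  calc Module.finrank ℚ (LinearMap.ker (A - 1)) + (q - 1)
      ≤ Module.finrank ℚ (LinearMap.ker (A - 1)) + Module.finrank ℚ W := by omega
    _ = Module.finrank ℚ ↥(LinearMap.ker (A - 1) ⊔ W) := by
        have := Submodule.finrank_sup_add_finrank_inf_eq (LinearMap.ker (A - 1)) W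
        rw [hdisj] at this
        simpa using this.symm
    _ ≤ Module.finrank ℚ V := Submodule.finrank_le _

/-- If G is a finite group of odd order, p is the smallest prime dividing |G|, and V is
a finite-dimensional ℚ-linear representation of G with dim V > dim V^G, then
dim V ≥ dim V^G + (p-1). -/
theorem dim_ge_invariants_add_of_odd_order (G : Type*) [Group G] [Fintype G]
    (hodd : Odd (Fintype.card G)) (p : ℕ) (hp : p = (Fintype.card G).minFac)
    (V : Type*) [AddCommGroup V] [Module ℚ V] [FiniteDimensional ℚ V]
    (ρ : Representation ℚ G V)
    (h : Module.finrank ℚ ρ.invariants < Module.finrank ℚ V) :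
    Module.finrank ℚ ρ.invariants + (p - 1) ≤ Module.finrank ℚ V := by
  -- there is some g with ρ g ≠ 1
  obtain ⟨g, hg⟩ : ∃ g : G, ρ g ≠ 1 := by
    by_contra hc
    push_neg at hc
    have : ρ.invariants = ⊤ := by
      rw [Submodule.eq_top_iff']
      intro v g
      rw [hc g]; rfl
    rw [this, finrank_top] at h
    exact lt_irrefl _ h
  have hpowcard : (ρ g) ^ Fintype.card G = 1 := by
    rw [← map_pow, pow_card_eq_one, map_one]
  set m := orderOf (ρ g) with hm
  have hmdvd : m ∣ Fintype.card G := orderOf_dvd_of_pow_eq_one hpowcard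
  have hm1 : m ≠ 1 := by
    intro h1
    exact hg (orderOf_eq_one_iff.mp h1)
  have hm0 : m ≠ 0 := by
    intro h0
    have hcz : Fintype.card G = 0 := Nat.eq_zero_of_zero_dvd (h0 ▸ hmdvd)
    exact Fintype.card_pos.ne' hcz
  set q := m.minFac with hq
  have hqprime : q.Prime := Nat.minFac_prime hm1
  have hqdvdm : q ∣ m := Nat.minFac_dvd m
  set A := (ρ g) ^ (m / q) with hA
  have hAq : A ^ q = 1 := by
    rw [hA, ← pow_mul, Nat.div_mul_cancel hqdvdm, hm, pow_orderOf_eq_one]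
  have hA1 : A ≠ 1 := by
    intro h1
    have hdvd := orderOf_dvd_of_pow_eq_one (n := m / q) (by rw [← hA, h1])
    rw [← hm] at hdvd
    have hlt : m / q < m := Nat.div_lt_self (Nat.pos_of_ne_zero hm0) hqprime.one_lt
    have hpos : 0 < m / q :=
      Nat.div_pos (Nat.le_of_dvd (Nat.pos_of_ne_zero hm0) hqdvdm) hqprime.pos
    have := Nat.le_of_dvd hpos hdvd
    omega
  have hkey := key_lemma q hqprime A hAq hA1
  -- invariants ≤ ker (A - 1)
  have hsub : ρ.invariants ≤ LinearMap.ker (A - 1) := by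
    intro v hv
    rw [LinearMap.mem_ker, LinearMap.sub_apply, Module.End.one_apply, sub_eq_zero, hA,
      ← map_pow]
    exact hv _
  have hrank : Module.finrank ℚ ρ.invariants ≤ Module.finrank ℚ (LinearMap.ker (A - 1)) :=
    Submodule.finrank_mono hsub
  -- p ≤ q
  have hqcard : q ∣ Fintype.card G := hqdvdm.trans hmdvd
  have hpq : p ≤ q := hp ▸ Nat.minFac_le_of_dvd hqprime.two_le hqcard
  omega
end

section
/- Let p > 2 be a prime. Every nontrivial irreducible representation of SL_2(F_p) over the rational numbers Q has dimension at least (p−1)/2. -/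
open Matrix MatrixGroups

open Polynomial

variable {p : ℕ} [Fact p.Prime]

def sl2U (a : ZMod p) : SL(2, ZMod p) := ⟨!![1, a; 0, 1], by simp [Matrix.det_fin_two_of]⟩
def sl2L (a : ZMod p) : SL(2, ZMod p) := ⟨!![1, 0; a, 1], by simp [Matrix.det_fin_two_of]⟩
def sl2W : SL(2, ZMod p) := ⟨!![0, -1; 1, 0], by simp [Matrix.det_fin_two_of]⟩

lemma sl2U_mul (a b : ZMod p) : sl2U a * sl2U b = sl2U (a + b) := by
  apply Subtype.ext
  rw [Matrix.SpecialLinearGroup.coe_mul]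
  simp [sl2U, Matrix.mul_fin_two]
  ring_nf

lemma sl2L_mul (a b : ZMod p) : sl2L a * sl2L b = sl2L (a + b) := by
  apply Subtype.ext
  rw [Matrix.SpecialLinearGroup.coe_mul]
  simp [sl2L, Matrix.mul_fin_two, add_comm]

lemma sl2U_zero : (sl2U 0 : SL(2, ZMod p)) = 1 := by
  apply Subtype.ext; simp [sl2U]
  exact (Matrix.eta_fin_two 1).symm.trans (by norm_num)

lemma sl2L_zero : (sl2L 0 : SL(2, ZMod p)) = 1 := by
  apply Subtype.ext; simp [sl2L]
  exact (Matrix.eta_fin_two 1).symm.trans (by norm_num)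

lemma sl2U_pow (n : ℕ) : (sl2U 1 : SL(2, ZMod p)) ^ n = sl2U (n : ZMod p) := by
  induction n with
  | zero => simpa using sl2U_zero.symm
  | succ n ih => rw [pow_succ, ih, sl2U_mul]; push_cast; ring_nf

lemma sl2W_mul_U (a : ZMod p) :
    (sl2W : SL(2, ZMod p)) * sl2U (-a) = sl2L a * sl2W := by
  apply Subtype.ext
  rw [Matrix.SpecialLinearGroup.coe_mul, Matrix.SpecialLinearGroup.coe_mul]
  simp [sl2U, sl2L, sl2W, Matrix.mul_fin_two]

lemma sl2_decomp (g : SL(2, ZMod p)) (hc : g.1 1 0 ≠ 0) :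
    g = sl2U ((g.1 0 0 - 1) / g.1 1 0) * sl2L (g.1 1 0) *
        sl2U ((g.1 1 1 - 1) / g.1 1 0) := by
  have hdet : g.1 0 0 * g.1 1 1 - g.1 0 1 * g.1 1 0 = 1 := by
    rw [← Matrix.det_fin_two]; exact g.2
  apply Subtype.ext
  show g.1 = _
  rw [Matrix.eta_fin_two g.1]
  rw [Matrix.SpecialLinearGroup.coe_mul, Matrix.SpecialLinearGroup.coe_mul]
  simp only [Matrix.SpecialLinearGroup.coe_mul, sl2U, sl2L, Matrix.mul_fin_two]
  ext i j
  fin_cases i <;> fin_cases j <;> simp <;> field_simp <;>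
    first
      | linear_combination hdet
      | linear_combination -hdet
      | linear_combination (g.1 1 0) * hdet
      | linear_combination (-(2:ZMod p)) * hdet
      | ring

lemma rho_trivial {V : Type*} [AddCommGroup V] [Module ℚ V]
    (ρ : Representation ℚ SL(2, ZMod p) V) (hU : ρ (sl2U 1) = 1) (g : SL(2, ZMod p)) :
    ρ g = 1 := by
  have hUa : ∀ a : ZMod p, ρ (sl2U a) = 1 := by
    intro a
    have : sl2U a = (sl2U 1 : SL(2, ZMod p)) ^ a.val := by
      rw [sl2U_pow, ZMod.natCast_val, ZMod.cast_id]
    rw [this, map_pow, hU, one_pow]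
  have hLa : ∀ a : ZMod p, ρ (sl2L a) = 1 := by
    intro a
    have h1 : ρ sl2W * ρ (sl2U (-a)) = ρ (sl2L a) * ρ sl2W := by
      rw [← _root_.map_mul, ← _root_.map_mul, sl2W_mul_U]
    rw [hUa, mul_one] at h1
    have h2 : ρ (sl2L a) * (ρ sl2W * ρ (sl2W⁻¹)) = ρ sl2W * ρ (sl2W⁻¹) := by
      rw [← mul_assoc, ← h1]
    rwa [← _root_.map_mul, mul_inv_cancel, _root_.map_one, mul_one] at h2
  by_cases hc : g.1 1 0 = 0
  · -- multiply by sl2L 1 to make the corner nonzero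
    have hg : g = (g * sl2L 1) * sl2L (-1) := by
      rw [mul_assoc, sl2L_mul, add_neg_cancel, sl2L_zero, mul_one]
    have hc' : (g * sl2L 1).1 1 0 ≠ 0 := by
      have hdet : g.1 0 0 * g.1 1 1 - g.1 0 1 * g.1 1 0 = 1 := by
        rw [← Matrix.det_fin_two]; exact g.2
      rw [hc, mul_zero, sub_zero] at hdet
      have : (g * sl2L 1).1 1 0 = g.1 1 1 := by
        rw [Matrix.SpecialLinearGroup.coe_mul]
        simp [sl2L, Matrix.mul_apply, Fin.sum_univ_two, hc]
      rw [this]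
      intro h; rw [h, mul_zero] at hdet; exact zero_ne_one hdet
    rw [hg, _root_.map_mul, hLa, mul_one]
    rw [sl2_decomp (g * sl2L 1) hc', _root_.map_mul, _root_.map_mul, hUa, hLa, hUa, one_mul, one_mul]
  · rw [sl2_decomp g hc, _root_.map_mul, _root_.map_mul, hUa, hLa, hUa, one_mul, one_mul]


/-- For a prime p > 2, every nontrivial irreducible ℚ-linear representation of SL₂(𝔽_p)
has dimension at least (p-1)/2. -/
theorem SL2_irreducible_dim_ge (p : ℕ) [Fact p.Prime] (hp : 2 < p)
    (V : Type*) [AddCommGroup V] [Module ℚ V] [FiniteDimensional ℚ V]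
    (ρ : Representation ℚ SL(2, ZMod p) V)
    (hirr : ∀ W : Submodule ℚ V, (∀ g : SL(2, ZMod p), ∀ v ∈ W, ρ g v ∈ W) →
      W = ⊥ ∨ W = ⊤)
    (hnontriv : ∃ (g : SL(2, ZMod p)) (v : V), ρ g v ≠ v) :
    (p - 1) / 2 ≤ Module.finrank ℚ V := by
  obtain ⟨g, v, hgv⟩ := hnontriv
  -- the standard unipotent acts nontrivially
  have hU : ρ (sl2U 1) ≠ 1 := by
    intro h
    exact hgv (by rw [rho_trivial ρ h g]; rfl)
  set f : Module.End ℚ V := ρ (sl2U 1) with hf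
  have hfp : f ^ p = 1 := by
    rw [hf, ← map_pow, sl2U_pow, ZMod.natCast_self, sl2U_zero, _root_.map_one]
  -- minpoly of f divides X^p - 1
  have haev : (Polynomial.aeval f) ((X : ℚ[X]) ^ p - 1) = 0 := by
    simp [hfp]
  have hdvd : minpoly ℚ f ∣ (X : ℚ[X]) ^ p - 1 := minpoly.dvd ℚ f haev
  have hXp : ((X : ℚ[X]) ^ p - 1) = cyclotomic p ℚ * (X - 1) :=
    (cyclotomic_prime_mul_X_sub_one ℚ p).symm
  have hne : ((X : ℚ[X]) ^ p - 1) ≠ 0 := by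
    simpa using (monic_X_pow_sub_C (1 : ℚ) (by omega : p ≠ 0)).ne_zero
  have hm0 : minpoly ℚ f ≠ 0 := fun h => hne (zero_dvd_iff.mp (h ▸ hdvd))
  have hirr_cyc : Irreducible (cyclotomic p ℚ) :=
    cyclotomic.irreducible_rat (by omega)
  by_cases hc : cyclotomic p ℚ ∣ minpoly ℚ f
  · -- dimension at least p - 1
    have h1 : (cyclotomic p ℚ).natDegree ≤ (minpoly ℚ f).natDegree :=
      Polynomial.natDegree_le_of_dvd hc hm0
    have h2 : (minpoly ℚ f).natDegree ≤ f.charpoly.natDegree :=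
      Polynomial.natDegree_le_of_dvd (LinearMap.minpoly_dvd_charpoly f)
        f.charpoly_monic.ne_zero
    rw [natDegree_cyclotomic, Nat.totient_prime Fact.out] at h1
    rw [LinearMap.charpoly_natDegree] at h2
    calc (p - 1) / 2 ≤ p - 1 := Nat.div_le_self _ _
      _ ≤ _ := le_trans h1 h2
  · -- then minpoly divides X - 1, so f = 1, contradiction
    exfalso
    have hcop : IsCoprime (cyclotomic p ℚ) (minpoly ℚ f) :=
      hirr_cyc.coprime_iff_not_dvd.mpr hc
    have hdvd' : minpoly ℚ f ∣ (X : ℚ[X]) - 1 := by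
      rw [hXp] at hdvd
      exact hcop.symm.dvd_of_dvd_mul_left hdvd
    obtain ⟨q, hq⟩ := hdvd'
    have : (Polynomial.aeval f) ((X : ℚ[X]) - 1) = 0 := by
      rw [hq, _root_.map_mul, minpoly.aeval, zero_mul]
    simp only [map_sub, Polynomial.aeval_X, _root_.map_one] at this
    exact hU (hf ▸ sub_eq_zero.mp this)
end

section
/- Let p > 2 be a prime. Every nontrivial irreducible representation of PSL_2(F_p) over the rational numbers Q has dimension at least (p−1)/2. -/
open Matrix MatrixGroups Polynomial

namespace PSL2Aux

variable {F : Type*} [Field F]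

/-- Upper transvection. -/
def L (t : F) : SL(2, F) := ⟨!![1, t; 0, 1], by simp [Matrix.det_fin_two_of]⟩

/-- Lower transvection. -/
def L' (t : F) : SL(2, F) := ⟨!![1, 0; t, 1], by simp [Matrix.det_fin_two_of]⟩

/-- The Weyl element. -/
def W : SL(2, F) := ⟨!![0, -1; 1, 0], by simp [Matrix.det_fin_two_of]⟩

lemma L_mul (s t : F) : L s * L t = L (t + s) := by
  apply Subtype.ext
  rw [Matrix.SpecialLinearGroup.coe_mul]
  simp [L, Matrix.SpecialLinearGroup.coe_mul, Matrix.mul_fin_two]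

lemma L_zero : (L (0 : F)) = 1 := by
  apply Subtype.ext
  simp [L, Matrix.one_fin_two]

lemma L_pow (k : ℕ) : (L (1 : F)) ^ k = L (k : F) := by
  induction k with
  | zero => simp [L_zero]
  | succ n ih =>
      rw [pow_succ, ih, L_mul]
      congr 1
      push_cast
      ring

lemma W_conj (t : F) : W * L t * W⁻¹ = L' (-t) := by
  rw [mul_inv_eq_iff_eq_mul]
  apply Subtype.ext
  rw [Matrix.SpecialLinearGroup.coe_mul, Matrix.SpecialLinearGroup.coe_mul]
  simp [W, L, L', Matrix.SpecialLinearGroup.coe_mul, Matrix.mul_fin_two]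

lemma mem_of_transvections (H : Subgroup (SL(2, F))) (hL : ∀ t : F, L t ∈ H)
    (hL' : ∀ t : F, L' t ∈ H) (g : SL(2, F)) : g ∈ H := by
  have key : ∀ (g : SL(2, F)) (a b c d : F),
      (g : Matrix (Fin 2) (Fin 2) F) = !![a, b; c, d] → c ≠ 0 → g ∈ H := by
    intro g a b c d hmat hc
    have hdet : a * d - b * c = 1 := by
      have h := g.prop
      rw [hmat, Matrix.det_fin_two_of] at h
      exact h
    have hg : g = L ((a - 1) / c) * L' c * L ((d - 1) / c) := by
      apply Subtype.ext
      rw [hmat]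
      rw [Matrix.SpecialLinearGroup.coe_mul, Matrix.SpecialLinearGroup.coe_mul]
      simp only [Matrix.SpecialLinearGroup.coe_mul, L, L', Matrix.mul_fin_two]
      ext i j
      fin_cases i <;> fin_cases j <;>
        simp only [Matrix.of_apply, Matrix.cons_val', Matrix.cons_val_zero,
          Matrix.cons_val_one, Matrix.head_cons, Matrix.empty_val',
          Matrix.cons_val_fin_one, Matrix.head_fin_const, Fin.isValue, Fin.zero_eta, Fin.mk_one] <;>
        field_simp <;>
        first
          | ring1
          | linear_combination hdet
          | linear_combination -hdet
          | linear_combination 2 * hdet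
          | linear_combination -2 * hdet
    rw [hg]
    exact H.mul_mem (H.mul_mem (hL _) (hL' _)) (hL _)
  by_cases hc : (g : Matrix (Fin 2) (Fin 2) F) 1 0 ≠ 0
  · exact key g _ _ _ _ (Matrix.eta_fin_two _) hc
  · push_neg at hc
    have ha : (g : Matrix (Fin 2) (Fin 2) F) 0 0 ≠ 0 := by
      intro h0
      have hdet := g.prop
      rw [Matrix.det_fin_two] at hdet
      rw [h0, hc] at hdet
      simp at hdet
    have hmem : L' 1 * g ∈ H := by
      apply key _ _ _ _ _ (Matrix.eta_fin_two _)
      have : ((L' (1 : F) * g : SL(2, F)) : Matrix (Fin 2) (Fin 2) F) 1 0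
          = (g : Matrix (Fin 2) (Fin 2) F) 0 0 + (g : Matrix (Fin 2) (Fin 2) F) 1 0 := by
        rw [Matrix.SpecialLinearGroup.coe_mul]
        simp [L', Matrix.SpecialLinearGroup.coe_mul, Matrix.mul_apply, Fin.sum_univ_two]
      rw [this, hc, add_zero]
      exact ha
    have := H.mul_mem (H.inv_mem (hL' 1)) hmem
    rwa [← mul_assoc, inv_mul_cancel, one_mul] at this

end PSL2Aux

/-- An endomorphism of a finite-dimensional ℚ-vector space of order dividing a prime p,
which is not the identity, forces dimension at least p - 1. -/
lemma end_order_p_dim {p : ℕ} [Fact p.Prime] (V : Type*) [AddCommGroup V] [Module ℚ V]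
    [FiniteDimensional ℚ V] (f : Module.End ℚ V) (hfp : f ^ p = 1) (hf : f ≠ 1) :
    p - 1 ≤ Module.finrank ℚ V := by
  have hp0 : 0 < p := (Fact.out : p.Prime).pos
  have haev : (aeval f) ((X : ℚ[X]) ^ p - 1) = 0 := by
    simp [hfp]
  have hm : minpoly ℚ f ∣ (X : ℚ[X]) ^ p - 1 := minpoly.dvd _ _ haev
  have hfac : cyclotomic p ℚ * ((X : ℚ[X]) - 1) = (X : ℚ[X]) ^ p - 1 :=
    cyclotomic_prime_mul_X_sub_one ℚ p
  have hirrcyc : Irreducible (cyclotomic p ℚ) := cyclotomic.irreducible_rat hp0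
  by_cases hdvd : cyclotomic p ℚ ∣ minpoly ℚ f
  · have h1 : minpoly ℚ f ∣ f.charpoly := LinearMap.minpoly_dvd_charpoly f
    have h2 : cyclotomic p ℚ ∣ f.charpoly := hdvd.trans h1
    have h3 : (cyclotomic p ℚ).natDegree ≤ f.charpoly.natDegree :=
      Polynomial.natDegree_le_of_dvd h2 f.charpoly_monic.ne_zero
    rwa [natDegree_cyclotomic, Nat.totient_prime (Fact.out : p.Prime),
      LinearMap.charpoly_natDegree] at h3
  · exfalso
    have hcop : IsCoprime (cyclotomic p ℚ) (minpoly ℚ f) :=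
      hirrcyc.coprime_iff_not_dvd.mpr hdvd
    have hm' : minpoly ℚ f ∣ ((X : ℚ[X]) - 1) * cyclotomic p ℚ := by
      rwa [mul_comm, hfac]
    have hdvd1 : minpoly ℚ f ∣ (X : ℚ[X]) - 1 := hcop.symm.dvd_of_dvd_mul_right hm'
    obtain ⟨q, hq⟩ := hdvd1
    have : (aeval f) ((X : ℚ[X]) - 1) = 0 := by
      rw [hq, _root_.map_mul, minpoly.aeval, zero_mul]
    simp only [map_sub, aeval_X, _root_.map_one, sub_eq_zero] at this
    exact hf this

open PSL2Aux in
/-- For a prime p > 2, every nontrivial irreducible ℚ-linear representation of PSL₂(𝔽_p)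
has dimension at least (p-1)/2. -/
theorem PSL2_irreducible_dim_ge (p : ℕ) [Fact p.Prime] (hp : 2 < p)
    (V : Type*) [AddCommGroup V] [Module ℚ V] [FiniteDimensional ℚ V]
    (ρ : Representation ℚ PSL(2, ZMod p) V)
    (hirr : ∀ W : Submodule ℚ V, (∀ g : PSL(2, ZMod p), ∀ v ∈ W, ρ g v ∈ W) →
      W = ⊥ ∨ W = ⊤)
    (hnontriv : ∃ (g : PSL(2, ZMod p)) (v : V), ρ g v ≠ v) :
    (p - 1) / 2 ≤ Module.finrank ℚ V := by
  have hp0 : 0 < p := (Fact.out : p.Prime).pos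
  -- the composed representation of SL(2, ZMod p)
  set π : SL(2, ZMod p) →* PSL(2, ZMod p) :=
    QuotientGroup.mk' (Subgroup.center (SL(2, ZMod p))) with hπ
  set σ : SL(2, ZMod p) →* Module.End ℚ V := ρ.comp π with hσ
  set f : Module.End ℚ V := σ (L (1 : ZMod p)) with hfdef
  have hfp : f ^ p = 1 := by
    rw [hfdef, ← map_pow, L_pow, ZMod.natCast_self, L_zero, _root_.map_one]
  have hf : f ≠ 1 := by
    intro hf1
    -- then the kernel of σ contains all transvections, hence everything
    have hLker : ∀ t : ZMod p, L t ∈ σ.ker := by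
      intro t
      obtain ⟨k, hk⟩ := ZMod.natCast_zmod_surjective (n := p) t
      rw [← hk, ← L_pow]
      exact Subgroup.pow_mem _ (by simpa [MonoidHom.mem_ker] using hf1) k
    have hL'ker : ∀ t : ZMod p, L' t ∈ σ.ker := by
      intro t
      have : W * L (-t) * W⁻¹ ∈ σ.ker :=
        (MonoidHom.normal_ker σ).conj_mem _ (hLker (-t)) W
      rwa [W_conj, neg_neg] at this
    have hall : ∀ g : SL(2, ZMod p), g ∈ σ.ker :=
      mem_of_transvections σ.ker hLker hL'ker
    obtain ⟨g, v, hgv⟩ := hnontriv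
    obtain ⟨s, hs⟩ := QuotientGroup.mk'_surjective (Subgroup.center (SL(2, ZMod p))) g
    have : ρ g = 1 := by
      have := hall s
      rw [MonoidHom.mem_ker, hσ, MonoidHom.comp_apply, hπ, hs] at this
      exact this
    rw [this] at hgv
    exact hgv rfl
  have h1 : p - 1 ≤ Module.finrank ℚ V := end_order_p_dim V f hfp hf
  exact le_trans (Nat.div_le_self _ 2) h1
end

section
/- Let G = A_4 and let H = ⟨(2 3 4)⟩ be the stabilizer of 1. For any finite-dimensional Q-linear representation V of G, dim_Q V − dim_Q V^G ≥ 3(dim_Q V^H − dim_Q V^G), and moreover dim_Q V ≡ dim_Q V^H (mod 2). -/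
open Equiv Polynomial Module LinearMap

namespace A4Aux

abbrev G4 := alternatingGroup (Fin 4)

instance : DecidablePred (· ∈ alternatingGroup (Fin 4)) :=
  fun σ => decidable_of_iff _ (Equiv.Perm.mem_alternatingGroup (f := σ)).symm

def c₀ : G4 := ⟨swap 1 2 * swap 2 3, by decide⟩
def x₁ : G4 := ⟨swap 0 1 * swap 2 3, by decide⟩
def x₂ : G4 := ⟨swap 0 2 * swap 1 3, by decide⟩
def x₃ : G4 := ⟨swap 0 3 * swap 1 2, by decide⟩
def a₁ : G4 := ⟨swap 0 2 * swap 1 2, by decide⟩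
def a₂ : G4 := ⟨swap 0 3 * swap 1 3, by decide⟩

def L : List G4 := [1, c₀, c₀*c₀, x₁, x₁*c₀, x₁*(c₀*c₀), x₂, x₂*c₀, x₂*(c₀*c₀),
  x₃, x₃*c₀, x₃*(c₀*c₀)]

lemma even_finrank_of_quad {W : Type*} [AddCommGroup W] [Module ℚ W] [FiniteDimensional ℚ W]
    (φ : W →ₗ[ℚ] W) (hφ : φ * φ + φ + 1 = 0) : ∃ k, Module.finrank ℚ W = 2 * k := by
  have hcyc : (cyclotomic 3 ℚ) = X^2 + X + 1 := by
    rw [cyclotomic_prime]; simp [Finset.sum_range_succ]; ring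
  have hirr : Irreducible (X^2 + X + 1 : ℚ[X]) := by
    rw [← hcyc]; exact cyclotomic.irreducible_rat (by norm_num)
  haveI : Fact (Irreducible (X^2 + X + 1 : ℚ[X])) := ⟨hirr⟩
  have haev : Polynomial.aeval φ (X^2 + X + 1 : ℚ[X]) = 0 := by
    simpa [pow_two] using hφ
  let ψ : AdjoinRoot (X^2 + X + 1 : ℚ[X]) →ₐ[ℚ] Module.End ℚ W :=
    Ideal.Quotient.liftₐ (Ideal.span {(X^2 + X + 1 : ℚ[X])}) (Polynomial.aeval φ) (fun a ha => by
      rw [Ideal.mem_span_singleton] at ha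
      obtain ⟨t, rfl⟩ := ha
      rw [map_mul, haev, zero_mul])
  letI : Module (AdjoinRoot (X^2 + X + 1 : ℚ[X])) W := Module.compHom W ψ.toRingHom
  haveI : IsScalarTower ℚ (AdjoinRoot (X^2 + X + 1 : ℚ[X])) W := ⟨fun r k w => by
    change ψ (r • k) w = r • ψ k w
    rw [map_smul]; rfl⟩
  have htower := Module.finrank_mul_finrank ℚ (AdjoinRoot (X^2 + X + 1 : ℚ[X])) W
  have hne : (X^2 + X + 1 : ℚ[X]) ≠ 0 := hirr.ne_zero
  have hK : finrank ℚ (AdjoinRoot (X^2 + X + 1 : ℚ[X])) = 2 := by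
    rw [(AdjoinRoot.powerBasis hne).finrank]
    show (X^2 + X + 1 : ℚ[X]).natDegree = 2
    compute_degree!
  exact ⟨finrank (AdjoinRoot (X^2 + X + 1 : ℚ[X])) W, by rw [← htower, hK]⟩

end A4Aux

open A4Aux

/-- For A₄ with H = ⟨(2 3 4)⟩ the stabilizer of the first point, and any
finite-dimensional ℚ-linear representation V:
dim V - dim V^G ≥ 3 (dim V^H - dim V^G), and dim V ≡ dim V^H (mod 2). -/
theorem A4_invariants_inequality
    (c : alternatingGroup (Fin 4))
    (hc : (c : Equiv.Perm (Fin 4)) = Equiv.swap (1 : Fin 4) 2 * Equiv.swap (2 : Fin 4) 3)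
    (H : Subgroup (alternatingGroup (Fin 4))) (hH : H = Subgroup.closure {c})
    (V : Type*) [AddCommGroup V] [Module ℚ V] [FiniteDimensional ℚ V]
    (ρ : Representation ℚ (alternatingGroup (Fin 4)) V) :
    3 * (Module.finrank ℚ (Representation.invariants (ρ.comp H.subtype)) -
        Module.finrank ℚ ρ.invariants) ≤
      Module.finrank ℚ V - Module.finrank ℚ ρ.invariants ∧
    Module.finrank ℚ V ≡
      Module.finrank ℚ (Representation.invariants (ρ.comp H.subtype)) [MOD 2] := by
  subst hH
  have hc0 : c = c₀ := Subtype.ext hc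
  subst hc0
  -- notation
  set A : V →ₗ[ℚ] V := ρ c₀ with hA
  set N : V →ₗ[ℚ] V := 1 + A + A * A with hN
  set F : V →ₗ[ℚ] V := (3:ℚ)⁻¹ • N with hF
  set B₁ : V →ₗ[ℚ] V := ρ x₁ with hB₁
  set B₂ : V →ₗ[ℚ] V := ρ x₂ with hB₂
  set B₃ : V →ₗ[ℚ] V := ρ x₃ with hB₃
  set NK : V →ₗ[ℚ] V := 1 + B₁ + B₂ + B₃ with hNK
  set Q : V →ₗ[ℚ] V := (4:ℚ)⁻¹ • NK with hQ
  set n := Module.finrank ℚ V with hn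
  set a := Module.finrank ℚ (Representation.invariants (ρ.comp (Subgroup.closure {c₀}).subtype))
    with ha
  set b := Module.finrank ℚ ρ.invariants with hb
  -- basic identities
  have hA3 : A * A * A = 1 := by
    rw [hA, ← map_mul, ← map_mul, show c₀ * c₀ * c₀ = 1 from by decide, map_one]
  have hAN : A * N = N := by
    have : A * N = A + A * A + A * A * A := by rw [hN]; noncomm_ring
    rw [this, hA3, hN]; abel
  have hAF : A * F = F := by
    rw [hF, mul_smul_comm, hAN]
  -- F is a projection onto the H-invariants
  have hρF : ∀ g ∈ Subgroup.closure {c₀}, ρ g * F = F := by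
    intro g hg
    induction hg using Subgroup.closure_induction with
    | mem x hx => rw [Set.mem_singleton_iff.mp hx]; exact hAF
    | one => rw [map_one, one_mul]
    | mul x y hx hy ihx ihy => rw [map_mul, mul_assoc, ihy, ihx]
    | inv x hx ih =>
        calc ρ x⁻¹ * F = ρ x⁻¹ * (ρ x * F) := by rw [ih]
        _ = F := by rw [← mul_assoc, ← map_mul, inv_mul_cancel, map_one, one_mul]
  have hFmem : ∀ v : V, F v ∈ Representation.invariants (ρ.comp (Subgroup.closure {c₀}).subtype) := by
    intro v
    rw [Representation.mem_invariants]
    intro g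
    have := hρF g.1 g.2
    calc (ρ.comp (Subgroup.closure {c₀}).subtype) g (F v) = (ρ g.1 * F) v := rfl
    _ = F v := by rw [this]
  have hFid : ∀ v ∈ Representation.invariants (ρ.comp (Subgroup.closure {c₀}).subtype),
      F v = v := by
    intro v hv
    rw [Representation.mem_invariants] at hv
    have hAv : A v = v := hv ⟨c₀, Subgroup.subset_closure rfl⟩
    have hNv : N v = (3:ℚ) • v := by
      rw [hN]
      simp only [LinearMap.add_apply, Module.End.one_apply, Module.End.mul_apply, hAv]
      module
    rw [hF, LinearMap.smul_apply, hNv, smul_smul]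
    norm_num
  have hFproj : LinearMap.IsProj
      (Representation.invariants (ρ.comp (Subgroup.closure {c₀}).subtype)) F := ⟨hFmem, hFid⟩
  have htrF : LinearMap.trace ℚ V F = (a : ℚ) := hFproj.trace
  -- Q is a projection onto range Q, containing the G-invariants
  have hB11 : B₁ * B₁ = 1 := by
    rw [hB₁, ← map_mul, show x₁ * x₁ = 1 from by decide, map_one]
  have hB22 : B₂ * B₂ = 1 := by
    rw [hB₂, ← map_mul, show x₂ * x₂ = 1 from by decide, map_one]
  have hB33 : B₃ * B₃ = 1 := by
    rw [hB₃, ← map_mul, show x₃ * x₃ = 1 from by decide, map_one]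
  have hB12 : B₁ * B₂ = B₃ := by
    rw [hB₁, hB₂, hB₃, ← map_mul, show x₁ * x₂ = x₃ from by decide]
  have hB13 : B₁ * B₃ = B₂ := by
    rw [hB₁, hB₂, hB₃, ← map_mul, show x₁ * x₃ = x₂ from by decide]
  have hB21 : B₂ * B₁ = B₃ := by
    rw [hB₁, hB₂, hB₃, ← map_mul, show x₂ * x₁ = x₃ from by decide]
  have hB23 : B₂ * B₃ = B₁ := by
    rw [hB₁, hB₂, hB₃, ← map_mul, show x₂ * x₃ = x₁ from by decide]
  have hB31 : B₃ * B₁ = B₂ := by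
    rw [hB₁, hB₂, hB₃, ← map_mul, show x₃ * x₁ = x₂ from by decide]
  have hB32 : B₃ * B₂ = B₁ := by
    rw [hB₁, hB₂, hB₃, ← map_mul, show x₃ * x₂ = x₁ from by decide]
  have hNKNK : NK * NK = (4:ℚ) • NK := by
    have : NK * NK = 1 + B₁ + B₂ + B₃ + (B₁ + B₁*B₁ + B₁*B₂ + B₁*B₃)
        + (B₂ + B₂*B₁ + B₂*B₂ + B₂*B₃) + (B₃ + B₃*B₁ + B₃*B₂ + B₃*B₃) := by
      rw [hNK]; noncomm_ring
    rw [this, hB11, hB22, hB33, hB12, hB13, hB21, hB23, hB31, hB32, hNK]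
    module
  have hQQ : Q * Q = Q := by
    rw [hQ, smul_mul_assoc, mul_smul_comm, hNKNK, smul_smul, smul_smul]
    norm_num
  have hQproj : LinearMap.IsProj (LinearMap.range Q) Q :=
    ⟨fun v => LinearMap.mem_range_self Q v, by
      rintro x ⟨w, rfl⟩
      calc Q (Q w) = (Q * Q) w := rfl
      _ = Q w := by rw [hQQ]⟩
  set m := Module.finrank ℚ (LinearMap.range Q) with hm
  have htrQ : LinearMap.trace ℚ V Q = (m : ℚ) := hQproj.trace
  -- G-invariants are contained in range Q and in H-invariants
  have hbm : b ≤ m := by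
    rw [hb, hm]
    apply Submodule.finrank_mono
    intro v hv
    rw [Representation.mem_invariants] at hv
    have hQv : Q v = v := by
      rw [hQ]
      simp only [LinearMap.smul_apply, hNK, LinearMap.add_apply, Module.End.one_apply,
        hB₁, hB₂, hB₃, hv x₁, hv x₂, hv x₃]
      rw [show v + v + v + v = (4:ℚ) • v from by module, smul_smul]
      norm_num
    exact ⟨v, hQv⟩
  have hba : b ≤ a := by
    rw [hb, ha]
    apply Submodule.finrank_mono
    intro v hv g
    exact hv g.1
  have han : a ≤ n := by rw [ha, hn]; exact Submodule.finrank_le _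
  -- the average map over G
  have hcard : Fintype.card G4 = 12 := by decide
  haveI : Invertible ((Fintype.card G4 : ℚ)) := invertibleOfNonzero (by rw [hcard]; norm_num)
  have htrE : LinearMap.trace ℚ V (Representation.averageMap ρ) = (b : ℚ) :=
    (Representation.isProj_averageMap ρ).trace
  have hnodup : L.Nodup := by decide
  have hmemL : ∀ g : G4, g ∈ L := by decide
  have huniv : (Finset.univ : Finset G4) = L.toFinset := by
    ext g
    simp [List.mem_toFinset, hmemL g]
  have hsumG : ∑ g : G4, ρ g = NK * N := by
    rw [huniv, List.sum_toFinset _ hnodup]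
    simp only [L, List.map_cons, List.map_nil, List.sum_cons, List.sum_nil, add_zero, map_mul,
      map_one]
    rw [hNK, hN, hA, hB₁, hB₂, hB₃]
    noncomm_ring
  have hEdef : Representation.averageMap ρ
      = ⅟(Fintype.card G4 : ℚ) • (NK * N) := by
    show Representation.asAlgebraHom ρ (GroupAlgebra.average ℚ G4) = _
    rw [GroupAlgebra.average, map_smul, map_sum]
    congr 1
    rw [← hsumG]
    exact Finset.sum_congr rfl fun g _ => Representation.asAlgebraHom_of ρ g
  have htr12 : (12:ℚ) * (b:ℚ) = LinearMap.trace ℚ V (NK * N) := by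
    have h := htrE
    rw [hEdef, map_smul, smul_eq_mul, invOf_eq_inv, hcard] at h
    have h12 : ((12:ℕ) : ℚ) ≠ 0 := by norm_num
    field_simp at h
    push_cast at h
    linarith
  -- conjugation invariance of the trace
  have hchi : ∀ g u : G4, LinearMap.trace ℚ V (ρ (u * g * u⁻¹)) = LinearMap.trace ℚ V (ρ g) := by
    intro g u
    rw [map_mul, LinearMap.trace_mul_comm, ← map_mul, inv_mul_cancel_left]
  have hcj1 : LinearMap.trace ℚ V (ρ (x₁*c₀)) = LinearMap.trace ℚ V (ρ c₀) := by
    rw [show x₁*c₀ = a₁*c₀*a₁⁻¹ from by decide]; exact hchi _ _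
  have hcj2 : LinearMap.trace ℚ V (ρ (x₁*(c₀*c₀))) = LinearMap.trace ℚ V (ρ (c₀*c₀)) := by
    rw [show x₁*(c₀*c₀) = a₂*(c₀*c₀)*a₂⁻¹ from by decide]; exact hchi _ _
  have hcj3 : LinearMap.trace ℚ V (ρ (x₂*c₀)) = LinearMap.trace ℚ V (ρ c₀) := by
    rw [show x₂*c₀ = a₂*c₀*a₂⁻¹ from by decide]; exact hchi _ _
  have hcj4 : LinearMap.trace ℚ V (ρ (x₂*(c₀*c₀))) = LinearMap.trace ℚ V (ρ (c₀*c₀)) := by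
    rw [show x₂*(c₀*c₀) = x₁*(c₀*c₀)*x₁⁻¹ from by decide]; exact hchi _ _
  have hcj5 : LinearMap.trace ℚ V (ρ (x₃*c₀)) = LinearMap.trace ℚ V (ρ c₀) := by
    rw [show x₃*c₀ = x₁*c₀*x₁⁻¹ from by decide]; exact hchi _ _
  have hcj6 : LinearMap.trace ℚ V (ρ (x₃*(c₀*c₀))) = LinearMap.trace ℚ V (ρ (c₀*c₀)) := by
    rw [show x₃*(c₀*c₀) = a₁*(c₀*c₀)*a₁⁻¹ from by decide]; exact hchi _ _
  have hχ1 : LinearMap.trace ℚ V (ρ (1 : G4)) = (n : ℚ) := by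
    rw [map_one, LinearMap.trace_one, hn]
  have hTsum : LinearMap.trace ℚ V (NK * N)
      = LinearMap.trace ℚ V (ρ (1:G4)) + LinearMap.trace ℚ V (ρ c₀)
        + LinearMap.trace ℚ V (ρ (c₀*c₀))
        + (LinearMap.trace ℚ V (ρ x₁) + LinearMap.trace ℚ V (ρ (x₁*c₀))
          + LinearMap.trace ℚ V (ρ (x₁*(c₀*c₀))))
        + (LinearMap.trace ℚ V (ρ x₂) + LinearMap.trace ℚ V (ρ (x₂*c₀))
          + LinearMap.trace ℚ V (ρ (x₂*(c₀*c₀))))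
        + (LinearMap.trace ℚ V (ρ x₃) + LinearMap.trace ℚ V (ρ (x₃*c₀))
          + LinearMap.trace ℚ V (ρ (x₃*(c₀*c₀)))) := by
    rw [← hsumG, huniv, List.sum_toFinset _ hnodup]
    simp only [L, List.map_cons, List.map_nil, List.sum_cons, List.sum_nil, add_zero, map_add]
    ring
  have htrN : LinearMap.trace ℚ V N
      = (n : ℚ) + LinearMap.trace ℚ V (ρ c₀) + LinearMap.trace ℚ V (ρ (c₀*c₀)) := by
    rw [hN, map_add, map_add, LinearMap.trace_one, hA, ← map_mul, hn]
  have htrNK : LinearMap.trace ℚ V NK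
      = (n : ℚ) + LinearMap.trace ℚ V (ρ x₁) + LinearMap.trace ℚ V (ρ x₂)
        + LinearMap.trace ℚ V (ρ x₃) := by
    rw [hNK, map_add, map_add, map_add, LinearMap.trace_one, hB₁, hB₂, hB₃, hn]
  have htrN' : LinearMap.trace ℚ V N = 3 * (a : ℚ) := by
    have h : (3:ℚ)⁻¹ * LinearMap.trace ℚ V N = (a : ℚ) := by
      rw [← htrF, hF, map_smul, smul_eq_mul]
    linarith
  have htrNK' : LinearMap.trace ℚ V NK = 4 * (m : ℚ) := by
    have h : (4:ℚ)⁻¹ * LinearMap.trace ℚ V NK = (m : ℚ) := by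
      rw [← htrQ, hQ, map_smul, smul_eq_mul]
    linarith
  have hkeyQ : 3 * (a : ℚ) + (m : ℚ) = (n : ℚ) + 3 * (b : ℚ) := by
    rw [hTsum, hcj1, hcj2, hcj3, hcj4, hcj5, hcj6, hχ1] at htr12
    linarith [htrN, htrNK, htrN', htrNK']
  have hkey : 3 * a + m = n + 3 * b := by exact_mod_cast hkeyQ
  constructor
  · omega
  -- parity
  · have hrange : LinearMap.range F
        = Representation.invariants (ρ.comp (Subgroup.closure {c₀}).subtype) := by
      apply le_antisymm
      · rintro _ ⟨v, rfl⟩; exact hFmem v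
      · intro v hv; exact ⟨v, hFid v hv⟩
    have hrn : finrank ℚ (LinearMap.range F) + finrank ℚ (LinearMap.ker F) = n :=
      LinearMap.finrank_range_add_finrank_ker F
    have hNA : N * A = A * N := by rw [hN]; noncomm_ring
    have hkerN : ∀ x ∈ LinearMap.ker F, N x = 0 := by
      intro x hx
      rw [LinearMap.mem_ker] at hx
      have h3 : (3:ℚ)⁻¹ • N x = 0 := by
        rw [← LinearMap.smul_apply, ← hF]; exact hx
      have := smul_eq_zero.mp h3
      rcases this with h | h
      · norm_num at h
      · exact h
    have hkerA : ∀ x ∈ LinearMap.ker F, A x ∈ LinearMap.ker F := by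
      intro x hx
      rw [LinearMap.mem_ker, hF, LinearMap.smul_apply]
      have : N (A x) = 0 := by
        calc N (A x) = (N * A) x := rfl
        _ = (A * N) x := by rw [hNA]
        _ = A (N x) := rfl
        _ = 0 := by rw [hkerN x hx, map_zero]
      rw [this, smul_zero]
    set φ : LinearMap.ker F →ₗ[ℚ] LinearMap.ker F := A.restrict hkerA with hφdef
    have hφ : φ * φ + φ + 1 = 0 := by
      refine LinearMap.ext fun x => Subtype.ext ?_
      have hNx : N x.1 = 0 := hkerN x.1 x.2
      rw [hN] at hNx
      simp only [LinearMap.add_apply, Module.End.one_apply, Module.End.mul_apply] at hNx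
      simp only [LinearMap.add_apply, Module.End.mul_apply, Module.End.one_apply, hφdef,
        Submodule.coe_add, LinearMap.restrict_coe_apply, LinearMap.zero_apply,
        ZeroMemClass.coe_zero]
      rw [show A (A x.1) + A x.1 + x.1 = x.1 + A x.1 + A (A x.1) from by abel]
      exact hNx
    obtain ⟨k, hk⟩ := even_finrank_of_quad φ hφ
    have hna : n = a + 2 * k := by
      rw [← hrn, hrange, ← hk, ha]
    show n ≡ a [MOD 2]
    unfold Nat.ModEq
    omega
end

section
/- Let G = S_4 and let H ≅ S_3 be the stabilizer of 1. For any finite-dimensional Q-linear representation V of G, dim_Q V − dim_Q V^G ≥ 3(dim_Q V^H − dim_Q V^G). -/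
open Equiv Finset Module

namespace S4Aux

abbrev G4 := Equiv.Perm (Fin 4)
abbrev St : Subgroup G4 := MulAction.stabilizer G4 (0 : Fin 4)

variable {V : Type*} [AddCommGroup V] [Module ℚ V]
variable (ρ : Representation ℚ G4 V)

noncomputable def avg : V →ₗ[ℚ] V := (24:ℚ)⁻¹ • ∑ g : G4, (ρ g : V →ₗ[ℚ] V)

lemma avg_apply (v : V) : avg ρ v = (24:ℚ)⁻¹ • ∑ g : G4, ρ g v := by
  simp [avg, LinearMap.sum_apply]

lemma avg_comm (σ : G4) (v : V) : avg ρ (ρ σ v) = avg ρ v := by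
  simp only [avg_apply]
  congr 1
  rw [← Equiv.sum_comp (Equiv.mulRight σ) (fun g => ρ g v)]
  refine Finset.sum_congr rfl fun g _ => ?_
  simp [map_mul]

lemma rho_avg (σ : G4) (v : V) : ρ σ (avg ρ v) = avg ρ v := by
  simp only [avg_apply, map_smul, map_sum]
  congr 1
  rw [← Equiv.sum_comp (Equiv.mulLeft σ) (fun g => ρ g v)]
  refine Finset.sum_congr rfl fun g _ => ?_
  simp [map_mul]

lemma avg_mem_invariants (v : V) : avg ρ v ∈ ρ.invariants := fun σ => rho_avg ρ σ v

lemma avg_of_invariant (v : V) (hv : v ∈ ρ.invariants) : avg ρ v = v := by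
  rw [avg_apply]
  have : ∀ g : G4, ρ g v = v := hv
  rw [Finset.sum_congr rfl fun g _ => this g, Finset.sum_const]
  have hcard : (Finset.univ : Finset G4).card = 24 := by simp [Fintype.card_perm]; rfl
  rw [hcard, ← Nat.cast_smul_eq_nsmul ℚ, smul_smul]
  norm_num

lemma range_avg : LinearMap.range (avg ρ) = ρ.invariants := by
  ext v
  constructor
  · rintro ⟨w, rfl⟩; exact avg_mem_invariants ρ w
  · intro hv; exact ⟨v, avg_of_invariant ρ v hv⟩

lemma key {v : V} (hv : v ∈ Representation.invariants (ρ.comp St.subtype))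
    {g g' : G4} (h : g 0 = g' 0) : ρ g v = ρ g' v := by
  have hm : g'⁻¹ * g ∈ St := by
    simp [MulAction.mem_stabilizer_iff, Equiv.Perm.smul_def, h]
  have := hv ⟨g'⁻¹ * g, hm⟩
  simp only [MonoidHom.comp_apply, Subgroup.coe_subtype] at this
  calc ρ g v = ρ (g' * (g'⁻¹ * g)) v := by rw [mul_inv_cancel_left]
    _ = ρ g' (ρ (g'⁻¹ * g) v) := by rw [map_mul]; rfl
    _ = ρ g' v := by rw [this]

lemma sum_swaps {v : V} (hv : v ∈ Representation.invariants (ρ.comp St.subtype))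
    (hk : avg ρ v = 0) : ∑ k : Fin 4, ρ (Equiv.swap 0 k) v = 0 := by
  have hsum : ∑ g : G4, ρ g v = 0 := by
    have := hk
    rw [avg_apply] at this
    calc ∑ g : G4, ρ g v = (24:ℚ) • ((24:ℚ)⁻¹ • ∑ g : G4, ρ g v) := by
          rw [smul_smul]; norm_num
      _ = (24:ℚ) • (0:V) := by rw [this]
      _ = 0 := smul_zero _
  have h1 : ∑ g : G4, ρ (Equiv.swap 0 (g 0)) v = 0 := by
    rw [← hsum]
    refine Finset.sum_congr rfl fun g _ => ?_
    exact key ρ hv (Equiv.swap_apply_left 0 (g 0))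
  have h2 : ∑ k : Fin 4, ∑ g ∈ ({g ∈ (univ : Finset G4) | g 0 = k}),
      ρ (Equiv.swap 0 (g 0)) v = 0 := by
    rw [Finset.sum_fiberwise univ (fun g : G4 => g 0) (fun g => ρ (Equiv.swap 0 (g 0)) v)]
    exact h1
  have h3 : ∀ k : Fin 4, ∑ g ∈ ({g ∈ (univ : Finset G4) | g 0 = k}),
      ρ (Equiv.swap 0 (g 0)) v = (6:ℚ) • ρ (Equiv.swap 0 k) v := by
    intro k
    have hc : ({g ∈ (univ : Finset G4) | g 0 = k}).card = 6 := by
      fin_cases k <;> decide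
    calc ∑ g ∈ ({g ∈ (univ : Finset G4) | g 0 = k}), ρ (Equiv.swap 0 (g 0)) v
        = ∑ _g ∈ ({g ∈ (univ : Finset G4) | g 0 = k}), ρ (Equiv.swap 0 k) v :=
          Finset.sum_congr rfl fun g hg => by rw [(Finset.mem_filter.1 hg).2]
      _ = ({g ∈ (univ : Finset G4) | g 0 = k}).card • ρ (Equiv.swap 0 k) v :=
          Finset.sum_const _
      _ = (6:ℚ) • ρ (Equiv.swap 0 k) v := by
          rw [hc, ← Nat.cast_smul_eq_nsmul ℚ]; norm_num
  rw [Finset.sum_congr rfl (fun k _ => h3 k), ← Finset.smul_sum] at h2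
  exact (smul_eq_zero.1 h2).resolve_left (by norm_num)

lemma four_zero {x : V} (h : x + x + x + x = 0) : x = 0 := by
  have h4 : (4:ℚ) • x = 0 := by
    rw [show (4:ℚ) = 1+1+1+1 by norm_num, add_smul, add_smul, add_smul, one_smul]
    exact h
  simpa using (smul_eq_zero.1 h4).resolve_left (by norm_num)

lemma core {u1 u2 u3 : V}
    (h1 : u1 ∈ Representation.invariants (ρ.comp St.subtype))
    (h2 : u2 ∈ Representation.invariants (ρ.comp St.subtype))
    (h3 : u3 ∈ Representation.invariants (ρ.comp St.subtype))
    (s1 : ∑ k : Fin 4, ρ (Equiv.swap 0 k) u1 = 0)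
    (s2 : ∑ k : Fin 4, ρ (Equiv.swap 0 k) u2 = 0)
    (s3 : ∑ k : Fin 4, ρ (Equiv.swap 0 k) u3 = 0)
    (R : ρ (Equiv.swap 0 1) u1 + ρ (Equiv.swap 0 2) u2 + ρ (Equiv.swap 0 3) u3 = 0) :
    u1 = 0 ∧ u2 = 0 ∧ u3 = 0 := by
  set b1 : Fin 4 → V := fun k => ρ (Equiv.swap 0 k) u1 with hb1
  set b2 : Fin 4 → V := fun k => ρ (Equiv.swap 0 k) u2 with hb2
  set b3 : Fin 4 → V := fun k => ρ (Equiv.swap 0 k) u3 with hb3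
  have b10 : b1 0 = u1 := by
    simp only [hb1, Equiv.swap_self]
    exact LinearMap.congr_fun (map_one ρ) u1
  have b20 : b2 0 = u2 := by
    simp only [hb2, Equiv.swap_self]
    exact LinearMap.congr_fun (map_one ρ) u2
  have b30 : b3 0 = u3 := by
    simp only [hb3, Equiv.swap_self]
    exact LinearMap.congr_fun (map_one ρ) u3
  have rel : ∀ σ : G4, b1 (σ 1) + b2 (σ 2) + b3 (σ 3) = 0 := by
    intro σ
    have e : ∀ (i : Fin 4) (u : V), u ∈ Representation.invariants (ρ.comp St.subtype) →
        ρ σ (ρ (Equiv.swap 0 i) u) = ρ (Equiv.swap 0 (σ i)) u := by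
      intro i u hu
      rw [← Module.End.mul_apply, ← map_mul]
      refine key ρ hu ?_
      simp [Equiv.Perm.mul_apply]
    have t := congrArg (ρ σ) R
    rw [map_add, map_add, map_zero, e 1 u1 h1, e 2 u2 h2, e 3 u3 h3] at t
    exact t
  have rid := rel 1
  simp only [Equiv.Perm.coe_one, id_eq] at rid
  have rA := rel (Equiv.swap 0 1)
  rw [show (Equiv.swap 0 1 : G4) 1 = 0 by decide, show (Equiv.swap 0 1 : G4) 2 = 2 by decide,
      show (Equiv.swap 0 1 : G4) 3 = 3 by decide] at rA
  have rB := rel (Equiv.swap 0 2)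
  rw [show (Equiv.swap 0 2 : G4) 1 = 1 by decide, show (Equiv.swap 0 2 : G4) 2 = 0 by decide,
      show (Equiv.swap 0 2 : G4) 3 = 3 by decide] at rB
  have rC := rel (Equiv.swap 0 3)
  rw [show (Equiv.swap 0 3 : G4) 1 = 1 by decide, show (Equiv.swap 0 3 : G4) 2 = 2 by decide,
      show (Equiv.swap 0 3 : G4) 3 = 0 by decide] at rC
  have eA : b1 0 = b1 1 := add_right_cancel (add_right_cancel (rA.trans rid.symm))
  have eB : b2 0 = b2 2 := add_left_cancel (add_right_cancel (rB.trans rid.symm))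
  have eC : b3 0 = b3 3 := add_left_cancel (rC.trans rid.symm)
  have rF := rel (Equiv.swap 0 2 * Equiv.swap 0 1)
  rw [show ((Equiv.swap 0 2 * Equiv.swap 0 1 : G4)) 1 = 2 by decide,
      show ((Equiv.swap 0 2 * Equiv.swap 0 1 : G4)) 2 = 0 by decide,
      show ((Equiv.swap 0 2 * Equiv.swap 0 1 : G4)) 3 = 3 by decide, eB] at rF
  have eF : b1 2 = b1 1 := add_right_cancel (add_right_cancel (rF.trans rid.symm))
  have rG := rel (Equiv.swap 0 3 * Equiv.swap 0 1)
  rw [show ((Equiv.swap 0 3 * Equiv.swap 0 1 : G4)) 1 = 3 by decide,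
      show ((Equiv.swap 0 3 * Equiv.swap 0 1 : G4)) 2 = 2 by decide,
      show ((Equiv.swap 0 3 * Equiv.swap 0 1 : G4)) 3 = 0 by decide, eC] at rG
  have eG : b1 3 = b1 1 := add_right_cancel (add_right_cancel (rG.trans rid.symm))
  have rH := rel (Equiv.swap 0 1 * Equiv.swap 0 2)
  rw [show ((Equiv.swap 0 1 * Equiv.swap 0 2 : G4)) 1 = 0 by decide,
      show ((Equiv.swap 0 1 * Equiv.swap 0 2 : G4)) 2 = 1 by decide,
      show ((Equiv.swap 0 1 * Equiv.swap 0 2 : G4)) 3 = 3 by decide, eA] at rH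
  have eH : b2 1 = b2 2 := add_left_cancel (add_right_cancel (rH.trans rid.symm))
  have rI := rel (Equiv.swap 0 3 * Equiv.swap 0 2)
  rw [show ((Equiv.swap 0 3 * Equiv.swap 0 2 : G4)) 1 = 1 by decide,
      show ((Equiv.swap 0 3 * Equiv.swap 0 2 : G4)) 2 = 3 by decide,
      show ((Equiv.swap 0 3 * Equiv.swap 0 2 : G4)) 3 = 0 by decide, eC] at rI
  have eI : b2 3 = b2 2 := add_left_cancel (add_right_cancel (rI.trans rid.symm))
  have rD := rel (Equiv.swap 0 1 * Equiv.swap 0 3)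
  rw [show ((Equiv.swap 0 1 * Equiv.swap 0 3 : G4)) 1 = 0 by decide,
      show ((Equiv.swap 0 1 * Equiv.swap 0 3 : G4)) 2 = 2 by decide,
      show ((Equiv.swap 0 1 * Equiv.swap 0 3 : G4)) 3 = 1 by decide, eA] at rD
  have eD : b3 1 = b3 3 := add_left_cancel (rD.trans rid.symm)
  have rE := rel (Equiv.swap 0 2 * Equiv.swap 0 3)
  rw [show ((Equiv.swap 0 2 * Equiv.swap 0 3 : G4)) 1 = 1 by decide,
      show ((Equiv.swap 0 2 * Equiv.swap 0 3 : G4)) 2 = 0 by decide,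
      show ((Equiv.swap 0 2 * Equiv.swap 0 3 : G4)) 3 = 2 by decide, eB] at rE
  have eE : b3 2 = b3 3 := add_left_cancel (rE.trans rid.symm)
  have S1 : b1 0 + b1 1 + b1 2 + b1 3 = 0 := by
    have := s1; rwa [Fin.sum_univ_four] at this
  have S2 : b2 0 + b2 1 + b2 2 + b2 3 = 0 := by
    have := s2; rwa [Fin.sum_univ_four] at this
  have S3 : b3 0 + b3 1 + b3 2 + b3 3 = 0 := by
    have := s3; rwa [Fin.sum_univ_four] at this
  rw [eF, eG, ← eA] at S1
  rw [eB, eH, eI] at S2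
  rw [eC, eD, eE] at S3
  refine ⟨?_, ?_, ?_⟩
  · rw [← b10]; exact four_zero S1
  · rw [← b20, eB]; exact four_zero S2
  · rw [← b30, eC]; exact four_zero S3

end S4Aux

open S4Aux Module

/-- For S₄ with H the stabilizer of the first point (≅ S₃), and any finite-dimensional
ℚ-linear representation V: dim V - dim V^G ≥ 3 (dim V^H - dim V^G). -/
theorem S4_invariants_inequality
    (H : Subgroup (Equiv.Perm (Fin 4)))
    (hH : H = MulAction.stabilizer (Equiv.Perm (Fin 4)) (0 : Fin 4))
    (V : Type*) [AddCommGroup V] [Module ℚ V] [FiniteDimensional ℚ V]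
    (ρ : Representation ℚ (Equiv.Perm (Fin 4)) V) :
    3 * (Module.finrank ℚ (Representation.invariants (ρ.comp H.subtype)) -
        Module.finrank ℚ ρ.invariants) ≤
      Module.finrank ℚ V - Module.finrank ℚ ρ.invariants := by
  subst hH
  set W : Submodule ℚ V := Representation.invariants (ρ.comp St.subtype) with hWdef
  -- the averaging projector
  set π := avg ρ with hπ
  have hinvW : ρ.invariants ≤ W := by
    intro v hv h
    exact hv _
  -- f : W → V, restriction of π
  set f : W →ₗ[ℚ] V := π ∘ₗ W.subtype with hf
  have hrange_f : LinearMap.range f = ρ.invariants := by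
    apply le_antisymm
    · rintro _ ⟨w, rfl⟩
      exact avg_mem_invariants ρ _
    · intro v hv
      exact ⟨⟨v, hinvW hv⟩, avg_of_invariant ρ v hv⟩
  have hV : finrank ℚ V = finrank ℚ ρ.invariants + finrank ℚ (LinearMap.ker π) := by
    rw [← range_avg ρ, ← hπ]
    exact (LinearMap.finrank_range_add_finrank_ker π).symm
  have hW : finrank ℚ W = finrank ℚ ρ.invariants + finrank ℚ (LinearMap.ker f) := by
    rw [← hrange_f]
    exact (LinearMap.finrank_range_add_finrank_ker f).symm
  -- the injection (ker f)³ → ker π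
  set U := LinearMap.ker f with hU
  set ι : U →ₗ[ℚ] V := W.subtype ∘ₗ U.subtype with hι
  have hι_apply : ∀ u : U, ι u = ((u : W) : V) := fun u => rfl
  have hmemW : ∀ u : U, (ι u) ∈ W := fun u => ((u : W)).2
  have hker : ∀ u : U, π (ι u) = 0 := fun u => u.2
  set Ψ : (U × U × U) →ₗ[ℚ] V :=
    ((ρ (Equiv.swap 0 1)) ∘ₗ ι ∘ₗ LinearMap.fst ℚ U (U × U)) +
    ((ρ (Equiv.swap 0 2)) ∘ₗ ι ∘ₗ ((LinearMap.fst ℚ U U) ∘ₗ LinearMap.snd ℚ U (U × U))) +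
    ((ρ (Equiv.swap 0 3)) ∘ₗ ι ∘ₗ ((LinearMap.snd ℚ U U) ∘ₗ LinearMap.snd ℚ U (U × U)))
    with hΨ
  have hΨ_apply : ∀ x : U × U × U,
      Ψ x = ρ (Equiv.swap 0 1) (ι x.1) + ρ (Equiv.swap 0 2) (ι x.2.1)
            + ρ (Equiv.swap 0 3) (ι x.2.2) := fun x => rfl
  have hΨ_mem : ∀ x : U × U × U, Ψ x ∈ LinearMap.ker π := by
    intro x
    rw [LinearMap.mem_ker, hΨ_apply, map_add, map_add, hπ]
    rw [avg_comm, avg_comm, avg_comm]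
    have := hker x.1; have := hker x.2.1; have := hker x.2.2
    rw [hπ] at *
    simp_all
  set Φ : (U × U × U) →ₗ[ℚ] LinearMap.ker π := Ψ.codRestrict _ hΨ_mem with hΦ
  have hinj : Function.Injective Φ := by
    rw [← LinearMap.ker_eq_bot, LinearMap.ker_eq_bot']
    intro x hx
    have hx' : Ψ x = 0 := congrArg Subtype.val hx
    rw [hΨ_apply] at hx'
    obtain ⟨z1, z2, z3⟩ := core ρ (hmemW x.1) (hmemW x.2.1) (hmemW x.2.2)
      (sum_swaps ρ (hmemW x.1) (hker x.1))
      (sum_swaps ρ (hmemW x.2.1) (hker x.2.1))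
      (sum_swaps ρ (hmemW x.2.2) (hker x.2.2)) hx'
    have e1 : x.1 = 0 := by
      apply Subtype.ext; apply Subtype.ext; exact z1
    have e2 : x.2.1 = 0 := by
      apply Subtype.ext; apply Subtype.ext; exact z2
    have e3 : x.2.2 = 0 := by
      apply Subtype.ext; apply Subtype.ext; exact z3
    exact Prod.ext e1 (Prod.ext e2 e3)
  have hdim3 : finrank ℚ (U × U × U) = 3 * finrank ℚ U := by
    rw [Module.finrank_prod, Module.finrank_prod]; ring
  have hle : 3 * finrank ℚ U ≤ finrank ℚ (LinearMap.ker π) := by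
    rw [← hdim3]
    exact LinearMap.finrank_le_finrank_of_injective hinj
  omega
end
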